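/- arXiv:2512.22360 — 3 statements merged into one kernel-verified Lean document; each statement's English description precedes it below -/
import Mathlib

section
/- For every natural number N, the constant coefficient (coefficient of u^0) of the Laurent polynomial (2 - u - u^{-1}) · (u + u^{-1} - 2)^N in ℤ[u, u^{-1}] equals (-1)^N · binomial(2N+2, N+1). -/
/-!
Since `u + u⁻¹ - 2 = u⁻¹ (u - 1)²`, the constant term of `(u + u⁻¹ - 2)^n` is the
coefficient of `u^n` in `(u - 1)^(2n)`, namely `(-1)^n C(2n, n)`. The product in the
theorem is `-(u + u⁻¹ - 2)^(N+1)`.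
-/

open Polynomial

namespace LaurentPolynomial

variable {R : Type*}

theorem coeff_T_mul [Semiring R] (m n : ℤ) (f : R[T;T⁻¹]) :
    (T m * f).coeff n = f.coeff (n - m) := by
  rw [T, AddMonoidAlgebra.coeff_single_mul_apply, one_mul, neg_add_eq_sub]

theorem coeff_toLaurent_natCast [Semiring R] (p : R[X]) (n : ℕ) :
    (toLaurent p).coeff n = p.coeff n := by
  rw [coeff_toLaurent]
  exact Finsupp.mapDomain_apply Nat.castEmbedding.injective _ n

theorem T_one_add_T_neg_one_sub_two [CommRing R] :
    (T 1 + T (-1) - 2 : R[T;T⁻¹]) = T (-1) * (T 1 - 1) ^ 2 := by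
  have h : (T (-1) * T 1 : R[T;T⁻¹]) = 1 := by rw [← T_add, neg_add_cancel, T_zero]
  linear_combination (2 - T 1 : R[T;T⁻¹]) * h

theorem coeff_zero_T_one_add_T_neg_one_sub_two_pow [CommRing R] (n : ℕ) :
    ((T 1 + T (-1) - 2 : R[T;T⁻¹]) ^ n).coeff 0 = (-1) ^ n * (2 * n).choose n := by
  have hpoly :
      (T 1 - 1 : R[T;T⁻¹]) ^ (2 * n) = toLaurent ((X + Polynomial.C (-1)) ^ (2 * n)) := by
    simp [sub_eq_add_neg]
  rw [T_one_add_T_neg_one_sub_two, mul_pow, T_pow, ← pow_mul, hpoly, coeff_T_mul, zero_sub,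
    mul_neg_one, neg_neg, coeff_toLaurent_natCast, coeff_X_add_C_pow, two_mul, Nat.add_sub_cancel]

end LaurentPolynomial

open LaurentPolynomial

/-- The constant coefficient of `(2 - u - u⁻¹) · (u + u⁻¹ - 2)^N` in `ℤ[u,u⁻¹]`
equals `(-1)^N · C(2N+2, N+1)`. -/
theorem stmt2 (N : ℕ) :
    ((2 - T 1 - T (-1)) * (T 1 + T (-1) - 2) ^ N : LaurentPolynomial ℤ).coeff 0 =
      (-1) ^ N * ((2 * N + 2).choose (N + 1) : ℤ) := by
  have h : ((2 - T 1 - T (-1)) * (T 1 + T (-1) - 2) ^ N : LaurentPolynomial ℤ) =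
      -(T 1 + T (-1) - 2) ^ (N + 1) := by ring
  rw [h, AddMonoidAlgebra.coeff_neg, Finsupp.neg_apply, coeff_zero_T_one_add_T_neg_one_sub_two_pow,
    mul_add, mul_one, pow_succ]
  ring
end

section
/- Let E be a real inner product space, σ : E → E a linear isometry, and ρ, λ ∈ E vectors such that ⟨ρ, λ⟩ ≥ 0 and σ(λ) = ρ - σ(ρ). Then ⟨ρ, λ⟩ = 0. -/
/-- If `σ` is a linear isometry of a real inner product space, `⟨ρ, l⟩ ≥ 0` and
`σ l = ρ - σ ρ`, then `⟨ρ, l⟩ = 0`. -/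
theorem stmt12 {E : Type*} [NormedAddCommGroup E] [InnerProductSpace ℝ E]
    (σ : E →ₗᵢ[ℝ] E) (ρ l : E)
    (h1 : 0 ≤ inner (𝕜 := ℝ) ρ l) (h2 : σ l = ρ - σ ρ) :
    inner (𝕜 := ℝ) ρ l = 0 := by
  have key : inner (𝕜 := ℝ) ρ l = inner (𝕜 := ℝ) (σ ρ) (σ l) :=
    (σ.inner_map_map ρ l).symm
  rw [h2, inner_sub_right, real_inner_self_eq_norm_sq, σ.norm_map] at key
  have hle : inner (𝕜 := ℝ) (σ ρ) ρ ≤ ‖ρ‖ ^ 2 := by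
    calc inner (𝕜 := ℝ) (σ ρ) ρ ≤ ‖σ ρ‖ * ‖ρ‖ := real_inner_le_norm _ _
    _ = ‖ρ‖ ^ 2 := by rw [σ.norm_map]; ring
  linarith
end

section
/- For every n ≥ 1, the constant coefficient (coefficient of u_1^0 u_2^0 ··· u_n^0) of the Laurent polynomial ∏_{1 ≤ i ≠ j ≤ n} (1 - u_i/u_j) in ℤ[u_1^{±1}, ..., u_n^{±1}] equals n!. -/
/-!
Pairing the factors for `i < j` and `j < i`, the Laurent identity
`(1 - x/y)(1 - y/x) = (y - x)(1/y - 1/x)` turns the product into `Δ(u) · Δ(u⁻¹)`, where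
`Δ(u) = ∏_{i<j} (u_j - u_i)` is the Vandermonde determinant. Expanding `Δ(u)` over permutations
gives `∑_σ sign σ · u^{w σ}` with pairwise distinct exponents `w σ` (`w σ` is `σ⁻¹` read as a
vector), so the constant term of `Δ(u) · Δ(u⁻¹)` is `∑_σ (sign σ)² = n!`.
-/

open AddMonoidAlgebra Finset

theorem one_sub_mul_mul_one_sub_mul {R : Type*} [CommRing R] {u u' v v' : R}
    (hu : u * u' = 1) :
    (1 - u * v') * (1 - v * u') = (v - u) * (v' - u') := by
  linear_combination (v * v' - 1) * hu

theorem one_sub_single_sub_mul_one_sub_single_sub {R G : Type*} [CommRing R] [AddCommGroup G]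
    (g h : G) :
    (1 - single (g - h) (1 : R)) * (1 - single (h - g) 1)
      = (single h 1 - single g 1) * (single (-h) 1 - single (-g) 1) := by
  have hmul (a b : G) : single (a + b) (1 : R) = single a 1 * single b 1 := by
    rw [single_mul_single, mul_one]
  rw [sub_eq_add_neg g, sub_eq_add_neg h, hmul, hmul]
  exact one_sub_mul_mul_one_sub_mul (by rw [← hmul, add_neg_cancel, one_def])

theorem prod_ne_eq_prod_Ioi_mul_swap {ι M : Type*} [LinearOrder ι] [Fintype ι]
    [LocallyFiniteOrderTop ι] [CommMonoid M] (f : ι × ι → M) :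
    ∏ p ∈ univ.filter (fun p : ι × ι => p.1 ≠ p.2), f p
      = ∏ i, ∏ j ∈ Ioi i, f (i, j) * f (j, i) := by
  have hsplit : univ.filter (fun p : ι × ι => p.1 ≠ p.2)
      = univ.filter (fun p : ι × ι => p.1 < p.2) ∪ univ.filter (fun p : ι × ι => p.2 < p.1) := by
    ext p; simpa only [mem_union, mem_filter, mem_univ, true_and] using ne_iff_lt_or_gt
  have hswap : ∏ p ∈ univ.filter (fun p : ι × ι => p.2 < p.1), f p
      = ∏ p ∈ univ.filter (fun p : ι × ι => p.1 < p.2), f p.swap :=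
    prod_equiv (Equiv.prodComm ι ι) (by simp) (by simp)
  rw [hsplit, prod_union (disjoint_filter.2 fun p _ h h' => lt_asymm h h'), hswap,
    ← prod_mul_distrib, prod_filter, Fintype.prod_prod_type]
  simp_rw [← prod_filter, filter_lt_eq_Ioi, Prod.swap_prod_mk]

theorem det_vandermonde_single {R G : Type*} [CommRing R] [AddCommMonoid G] {n : ℕ}
    (e : Fin n → G) :
    (Matrix.vandermonde fun i => single (e i) (1 : R)).det
      = ∑ σ : Equiv.Perm (Fin n),
          single (∑ i : Fin n, (i : ℕ) • e (σ i)) (Equiv.Perm.sign σ : R) := by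
  rw [Matrix.det_apply]
  refine sum_congr rfl fun σ _ => ?_
  simp only [Matrix.vandermonde_apply, single_pow, one_pow, prod_single, prod_const_one]
  rw [Units.smul_def, ← Int.cast_smul_eq_zsmul R, smul_single', mul_one]

theorem coeff_zero_sum_single_mul_sum_single_neg {ι R G : Type*} [Fintype ι] [CommSemiring R]
    [AddCommGroup G] {w : ι → G} (hw : Function.Injective w) (c d : ι → R) :
    ((∑ i, single (w i) (c i)) * ∑ j, single (-w j) (d j)).coeff 0 = ∑ i, c i * d i := by
  classical
  simp only [sum_mul_sum, single_mul_single, coeff_sum, coeff_single, Finsupp.finsetSum_apply,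
    Finsupp.single_apply, add_neg_eq_zero, hw.eq_iff]
  simp

theorem injective_sum_smul_pi_single_perm (n : ℕ) :
    Function.Injective fun σ : Equiv.Perm (Fin n) =>
      ∑ i : Fin n, (i : ℕ) • (Pi.single (σ i) (1 : ℤ) : Fin n → ℤ) := by
  have happly (σ : Equiv.Perm (Fin n)) (k : Fin n) :
      (∑ i : Fin n, (i : ℕ) • (Pi.single (σ i) (1 : ℤ) : Fin n → ℤ)) k = (σ.symm k : ℕ) := by
    simp [Finset.sum_apply, Pi.single_apply, eq_comm (a := k), ← Equiv.eq_symm_apply]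
  intro σ τ h
  have hsymm := fun k => congrFun h k
  simp only [happly, Nat.cast_inj, Fin.val_inj] at hsymm
  exact inv_inj.1 (Equiv.ext hsymm)

theorem stmt13_general (n : ℕ) :
    ((∏ p ∈ Finset.univ.filter (fun p : Fin n × Fin n => p.1 ≠ p.2),
        (1 - AddMonoidAlgebra.single (Pi.single p.1 1 - Pi.single p.2 1) 1) :
      AddMonoidAlgebra ℤ (Fin n → ℤ)).coeff : (Fin n → ℤ) →₀ ℤ) 0 = (n.factorial : ℤ) := by
  rw [prod_ne_eq_prod_Ioi_mul_swap]
  simp_rw [one_sub_single_sub_mul_one_sub_single_sub, prod_mul_distrib, ← Matrix.det_vandermonde,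
    det_vandermonde_single]
  simp only [smul_neg, sum_neg_distrib]
  rw [coeff_zero_sum_single_mul_sum_single_neg (injective_sum_smul_pi_single_perm n)]
  simp [Fintype.card_perm]

/-- Dyson's constant term identity with equal parameters: for `n ≥ 1`, the constant
coefficient (coefficient of `u₁^0 ⋯ u_n^0`) of `∏_{i ≠ j} (1 - u_i/u_j)` in the
multivariate Laurent polynomial ring `ℤ[u₁^{±1}, …, u_n^{±1}]`
(modeled as the group algebra of the exponent group `Fin n → ℤ` over `ℤ`)
equals `n!`. -/
theorem stmt13 (n : ℕ) (hn : 1 ≤ n) :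
    ((∏ p ∈ Finset.univ.filter (fun p : Fin n × Fin n => p.1 ≠ p.2),
        (1 - AddMonoidAlgebra.single (Pi.single p.1 1 - Pi.single p.2 1) 1) :
      AddMonoidAlgebra ℤ (Fin n → ℤ)).coeff : (Fin n → ℤ) →₀ ℤ) 0 = (n.factorial : ℤ) :=
  stmt13_general n
end
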